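/- Let z and ω be complex numbers with |z| < 1 and |ω| = 1. Then (1+z)/((1 − ωz)(1 − ω̄z)) = (1 − z)·Σ_{m=0}^∞ |Σ_{j=0}^m ω^j|² z^m, where ω̄ denotes the complex conjugate of ω; both sides equal Σ_{m=0}^∞ (Σ_{j=−m}^{m} ω^j) z^m, and the series converge absolutely for |z| < 1. -/

import Mathlib

open Complex Filter MeasureTheory Finset HurwitzZeta
open scoped ArithmeticFunction Real Classical

noncomputable section

/-- The finite set of primes `p ≤ X`. -/
def primesUpTo (X : ℝ) : Finset ℕ :=
  (Finset.range (Nat.floor X + 1)).filter (fun p => p.Prime ∧ (p : ℝ) ≤ X)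

/-- The finite set of naturals `n ≤ X`. -/
def natsUpTo (X : ℝ) : Finset ℕ :=
  (Finset.range (Nat.floor X + 1)).filter (fun n => (n : ℝ) ≤ X)

/-- Truncated Euler product `P_X(s,χ)`, defined via the primitive character `χ*` inducing `χ`:
`P_X(s,χ) = ∏_{p ∣ q} (1 - χ*(p) p^{-s}) · exp(∑_{n ≤ X} χ*(n) Λ(n) / (n^s log n))`. -/
def PX {q : ℕ} (X : ℝ) (χ : DirichletCharacter ℂ q) (s : ℂ) : ℂ :=
  (∏ p ∈ q.primeFactors, (1 - χ.primitiveCharacter ((p : ℕ) : ZMod χ.conductor) * (p : ℂ) ^ (-s))) *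
    Complex.exp (∑ n ∈ natsUpTo X,
      χ.primitiveCharacter ((n : ℕ) : ZMod χ.conductor) * (Λ n : ℂ) / ((n : ℂ) ^ s * (Real.log n : ℂ)))

/-- `𝓟_X^ℓ(s) = ∏_χ P_X(s,χ)^{ℓ_χ}`. -/
def PXl {q : ℕ} (X : ℝ) (ℓ : DirichletCharacter ℂ q → ℕ) (s : ℂ) : ℂ :=
  ∏ χ : DirichletCharacter ℂ q, (PX X χ s) ^ (ℓ χ)

/-- A Dirichlet character as an arithmetic function. -/
def chiArith {q : ℕ} (χ : DirichletCharacter ℂ q) : ArithmeticFunction ℂ :=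
  ⟨fun n => if n = 0 then 0 else χ ((n : ℕ) : ZMod q), by simp⟩

/-- `d_ℓ`, the coefficients of the Dirichlet series of `𝓛^ℓ(s) = ∏_χ L(s,χ)^{ℓ_χ}`,
i.e. the Dirichlet convolution product `∏_χ χ^{*ℓ_χ}`. -/
def dcoef {q : ℕ} (ℓ : DirichletCharacter ℂ q → ℕ) : ArithmeticFunction ℂ :=
  ∏ χ : DirichletCharacter ℂ q, (chiArith χ) ^ (ℓ χ)

/-- `P*_X(s,χ) = ∏_{p ≤ X}(1 − χ(p)p^{−s})^{−1} · ∏_{√X < p ≤ X}(1 + χ(p)²/(2p^{2s}))^{−1}`. -/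
def PstarX {q : ℕ} (X : ℝ) (χ : DirichletCharacter ℂ q) (s : ℂ) : ℂ :=
  ((primesUpTo X).prod (fun p : ℕ => (1 - χ ((p : ℕ) : ZMod q) * (p : ℂ) ^ (-s))⁻¹)) *
    ((primesUpTo X).filter (fun p : ℕ => Real.sqrt X < (p : ℝ))).prod
      (fun p : ℕ => (1 + χ ((p : ℕ) : ZMod q) ^ 2 / (2 * (p : ℂ) ^ (2 * s)))⁻¹)

/-- `𝓟*_X^ℓ(s) = ∏_χ P*_X(s,χ)^{ℓ_χ}`. -/
def PstarXl {q : ℕ} (X : ℝ) (ℓ : DirichletCharacter ℂ q → ℕ) (s : ℂ) : ℂ :=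
  ∏ χ : DirichletCharacter ℂ q, (PstarX X χ s) ^ (ℓ χ)

/-- `Q_X(s,χ) = ∏_{p ≤ √X}(1 − χ(p)p^{−s}) · ∏_{√X < p ≤ X}(1 − χ(p)p^{−s} + χ(p)²/(2p^{2s}))`. -/
def QX {q : ℕ} (X : ℝ) (χ : DirichletCharacter ℂ q) (s : ℂ) : ℂ :=
  (((primesUpTo X).filter (fun p : ℕ => (p : ℝ) ≤ Real.sqrt X)).prod
      (fun p : ℕ => 1 - χ ((p : ℕ) : ZMod q) * (p : ℂ) ^ (-s))) *
    ((primesUpTo X).filter (fun p : ℕ => Real.sqrt X < (p : ℝ))).prod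
      (fun p : ℕ => 1 - χ ((p : ℕ) : ZMod q) * (p : ℂ) ^ (-s)
        + χ ((p : ℕ) : ZMod q) ^ 2 / (2 * (p : ℂ) ^ (2 * s)))

/-- `𝓠_X^ℓ(s) = ∏_χ Q_X(s,χ)^{ℓ_χ}`. -/
def QXl {q : ℕ} (X : ℝ) (ℓ : DirichletCharacter ℂ q → ℕ) (s : ℂ) : ℂ :=
  ∏ χ : DirichletCharacter ℂ q, (QX X χ s) ^ (ℓ χ)

/-- `𝓛^ℓ(s) = ∏_χ L(s,χ)^{ℓ_χ}`. -/
def Ll {q : ℕ} [NeZero q] (ℓ : DirichletCharacter ℂ q → ℕ) (s : ℂ) : ℂ :=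
  ∏ χ : DirichletCharacter ℂ q, (DirichletCharacter.LFunction χ s) ^ (ℓ χ)

/-- GRH for the Dirichlet L-functions modulo `q`: every zero `ρ` of `L(s,χ)` with
`0 < Re ρ < 1` satisfies `Re ρ = 1/2`. -/
def GRHmod (q : ℕ) [NeZero q] : Prop :=
  ∀ χ : DirichletCharacter ℂ q, ∀ ρ : ℂ,
    DirichletCharacter.LFunction χ ρ = 0 → 0 < ρ.re → ρ.re < 1 → ρ.re = 1 / 2

end

/-! With `S m = ∑_{j ≤ m} ω ^ j` and `T m = ∑_{|j| ≤ m} ω ^ j`: on the unit circle `ω̄ = ω⁻¹`, so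
`ω ^ m * |S m|² = S m ^ 2`, and the polynomial identity `S (m+1) ^ 2 = S (2m+2) + ω * S m ^ 2`
together with `ω ^ m * T m = S (2m)` gives `|S (m+1)|² - |S m|² = T (m+1)`. Since also
`T (m+1) - T m = ω ^ (m+1) + ω⁻¹ ^ (m+1)`, multiplying either power series by `1 - z` telescopes:
`(1 - z) ∑ |S m|² z ^ m = ∑ T m z ^ m` and
`(1 - z) ∑ T m z ^ m = 1 + ωz / (1 - ωz) + ω̄z / (1 - ω̄z) = (1 - z²) / ((1 - ωz)(1 - ω̄z))`.
Absolute convergence follows from `|S m| ≤ m + 1` and `|T m| ≤ 2m + 1`. -/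

lemma sq_geom_sum_range_succ {R : Type*} [CommRing R] (w : R) (n : ℕ) :
    (∑ j ∈ range (n + 1), w ^ j) ^ 2
      = ∑ j ∈ range (2 * n + 1), w ^ j + w * (∑ j ∈ range n, w ^ j) ^ 2 := by
  have h_split : ∑ j ∈ range (2 * n + 1), w ^ j
      = ∑ j ∈ range n, w ^ j + w ^ n * ∑ j ∈ range (n + 1), w ^ j := by
    rw [two_mul, add_assoc, sum_range_add, mul_sum]
    simp only [pow_add]
  linear_combination (∑ j ∈ range (n + 1), w ^ j) * sum_range_succ (w ^ ·) n
    + (∑ j ∈ range n, w ^ j) * geom_sum_succ (x := w) (n := n) - h_split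

lemma sum_Icc_zpow_succ {K : Type*} [DivisionRing K] (w : K) (m : ℕ) :
    ∑ j ∈ Icc (-((m + 1 : ℕ) : ℤ)) (m + 1 : ℕ), w ^ j
      = ∑ j ∈ Icc (-(m : ℤ)) m, w ^ j + w ^ (m + 1) + w⁻¹ ^ (m + 1) := by
  have h_Icc : Icc (-((m + 1 : ℕ) : ℤ)) (m + 1 : ℕ)
      = insert (-(m : ℤ) - 1) (insert ((m : ℤ) + 1) (Icc (-(m : ℤ)) m)) := by
    rw [insert_Icc_right_eq_Icc_add_one (by omega), insert_Icc_left_eq_Icc_sub_one (by omega)]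
    push_cast
    ring_nf
  rw [h_Icc, sum_insert (by simp; omega), sum_insert (by simp)]
  rw [show -(m : ℤ) - 1 = -((m + 1 : ℕ) : ℤ) by push_cast; ring, zpow_neg, zpow_natCast, inv_pow,
    show (m : ℤ) + 1 = ((m + 1 : ℕ) : ℤ) by push_cast; ring, zpow_natCast]
  abel

lemma pow_mul_sum_Icc_zpow {K : Type*} [Field K] {w : K} (hw : w ≠ 0) (m : ℕ) :
    w ^ m * ∑ j ∈ Icc (-(m : ℤ)) m, w ^ j = ∑ j ∈ range (2 * m + 1), w ^ j := by
  induction m with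
  | zero => simp
  | succ m ih =>
    rw [sum_Icc_zpow_succ, show 2 * (m + 1) + 1 = 2 * m + 1 + 1 + 1 by ring, sum_range_succ,
      geom_sum_succ, ← ih, inv_pow]
    field_simp
    ring

lemma norm_geom_sum_le {𝕜 : Type*} [NormedDivisionRing 𝕜] {w : 𝕜} (hw : ‖w‖ = 1) (n : ℕ) :
    ‖∑ j ∈ range n, w ^ j‖ ≤ n :=
  (norm_sum_le _ _).trans (by simp [hw])

lemma norm_sum_Icc_zpow_le {𝕜 : Type*} [NormedField 𝕜] {w : 𝕜} (hw : ‖w‖ = 1) (m : ℕ) :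
    ‖∑ j ∈ Icc (-(m : ℤ)) m, w ^ j‖ ≤ 2 * m + 1 := by
  have hw0 : w ≠ 0 := by rintro rfl; simp at hw
  have h_norm := congrArg norm (pow_mul_sum_Icc_zpow hw0 m)
  rw [norm_mul, norm_pow, hw, one_pow, one_mul] at h_norm
  rw [h_norm]
  exact_mod_cast norm_geom_sum_le hw (2 * m + 1)

lemma pow_mul_conj_geom_sum {w : ℂ} (hw : ‖w‖ = 1) (m : ℕ) :
    w ^ m * starRingEnd ℂ (∑ j ∈ range (m + 1), w ^ j) = ∑ j ∈ range (m + 1), w ^ j := by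
  have hw0 : w ≠ 0 := by rintro rfl; simp at hw
  conv_rhs => rw [← sum_range_reflect]
  rw [map_sum, mul_sum]
  refine sum_congr rfl fun j hj ↦ ?_
  rw [mem_range] at hj
  rw [map_pow, ← inv_eq_conj hw, inv_pow, ← pow_sub₀ _ hw0 (by omega)]
  congr 1

lemma pow_mul_norm_sq_geom_sum {w : ℂ} (hw : ‖w‖ = 1) (m : ℕ) :
    w ^ m * (‖∑ j ∈ range (m + 1), w ^ j‖ ^ 2 : ℝ) = (∑ j ∈ range (m + 1), w ^ j) ^ 2 := by
  push_cast
  rw [← mul_conj', ← mul_left_comm, pow_mul_conj_geom_sum hw m, sq]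

lemma norm_sq_geom_sum_succ_sub {w : ℂ} (hw : ‖w‖ = 1) (m : ℕ) :
    ((‖∑ j ∈ range (m + 1 + 1), w ^ j‖ ^ 2 : ℝ) : ℂ) - (‖∑ j ∈ range (m + 1), w ^ j‖ ^ 2 : ℝ)
      = ∑ j ∈ Icc (-((m + 1 : ℕ) : ℤ)) (m + 1 : ℕ), w ^ j := by
  have hw0 : w ≠ 0 := by rintro rfl; simp at hw
  apply mul_left_cancel₀ (pow_ne_zero (m + 1) hw0)
  rw [pow_mul_sum_Icc_zpow hw0]
  linear_combination pow_mul_norm_sq_geom_sum hw (m + 1) - w * pow_mul_norm_sq_geom_sum hw m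
    + sq_geom_sum_range_succ w (m + 1)

lemma summable_norm_mul_pow_of_norm_le {𝕜 : Type*} [NormedDivisionRing 𝕜] {a : ℕ → 𝕜} {z : 𝕜}
    {C : ℝ} {k : ℕ} (ha : ∀ n, ‖a n‖ ≤ C * ((n : ℝ) + 1) ^ k) (hz : ‖z‖ < 1) :
    Summable fun n ↦ ‖a n * z ^ n‖ := by
  have hC : 0 ≤ C := by simpa using (norm_nonneg _).trans (ha 0)
  have hr : ‖‖z‖‖ < 1 := by rwa [norm_norm]
  refine .of_nonneg_of_le (fun n ↦ norm_nonneg _) (fun n ↦ ?_)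
    ((summable_descFactorial_mul_geometric_of_norm_lt_one k hr).mul_left C)
  have h_pow : ((n : ℝ) + 1) ^ k ≤ (n + k).descFactorial k := by
    have := Nat.pow_sub_le_descFactorial (n + k) k
    rw [show n + k + 1 - k = n + 1 by omega] at this
    exact_mod_cast this
  rw [norm_mul, norm_pow, ← mul_assoc]
  gcongr
  exact (ha n).trans (by gcongr)

lemma summable_norm_sum_Icc_zpow_mul_pow {𝕜 : Type*} [NormedField 𝕜] {w z : 𝕜} (hw : ‖w‖ = 1)
    (hz : ‖z‖ < 1) : Summable fun m : ℕ ↦ ‖(∑ j ∈ Icc (-(m : ℤ)) m, w ^ j) * z ^ m‖ :=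
  summable_norm_mul_pow_of_norm_le (C := 2) (k := 1)
    (fun m ↦ (norm_sum_Icc_zpow_le hw m).trans (by linarith)) hz

lemma one_sub_mul_tsum_mul_pow {R : Type*} [CommRing R] [TopologicalSpace R] [IsTopologicalRing R]
    [T2Space R] (a : ℕ → R) {z : R} (ha : Summable fun m ↦ a m * z ^ m) :
    (1 - z) * ∑' m, a m * z ^ m = a 0 + ∑' m, (a (m + 1) - a m) * z ^ (m + 1) := by
  have h_shift : Summable fun m ↦ a (m + 1) * z ^ (m + 1) := (summable_nat_add_iff 1).2 ha
  have h_mul : Summable fun m ↦ a m * z ^ (m + 1) := by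
    simpa only [pow_succ, mul_assoc] using ha.mul_right z
  have h_drop : ∑' m, a (m + 1) * z ^ (m + 1) = ∑' m, a m * z ^ m - a 0 := by
    rw [ha.tsum_eq_zero_add]
    simp
  have h_pull : ∑' m, a m * z ^ (m + 1) = z * ∑' m, a m * z ^ m := by
    rw [← ha.tsum_mul_left z]
    exact tsum_congr fun m ↦ by ring
  simp only [sub_mul]
  rw [h_shift.tsum_sub h_mul, h_drop, h_pull]
  ring

lemma one_add_div_one_sub_add_div_one_sub {K : Type*} [Field K] {a b : K} (ha : 1 - a ≠ 0)
    (hb : 1 - b ≠ 0) : 1 + (a / (1 - a) + b / (1 - b)) = (1 - a * b) / ((1 - a) * (1 - b)) := by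
  field_simp
  ring

lemma one_sub_ne_zero_of_norm_lt_one {𝕜 : Type*} [NormedDivisionRing 𝕜] {u : 𝕜} (hu : ‖u‖ < 1) :
    1 - u ≠ 0 := by
  rw [sub_ne_zero]
  rintro rfl
  simp at hu

lemma tsum_sum_Icc_zpow_mul_pow {w z : ℂ} (hw : ‖w‖ = 1) (hz : ‖z‖ < 1) :
    ∑' m : ℕ, (∑ j ∈ Icc (-(m : ℤ)) m, w ^ j) * z ^ m
      = (1 + z) / ((1 - w * z) * (1 - starRingEnd ℂ w * z)) := by
  have hw0 : w ≠ 0 := by rintro rfl; simp at hw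
  have hwz : ‖w * z‖ < 1 := by rwa [norm_mul, hw, one_mul]
  have hwz' : ‖w⁻¹ * z‖ < 1 := by rwa [norm_mul, norm_inv, hw, inv_one, one_mul]
  have h_geom {u : ℂ} (hu : ‖u‖ < 1) : HasSum (fun m : ℕ ↦ u ^ (m + 1)) (u / (1 - u)) := by
    simpa only [pow_succ', div_eq_mul_inv] using (hasSum_geometric_of_norm_lt_one hu).mul_left u
  have h_summable := (summable_norm_sum_Icc_zpow_mul_pow hw hz).of_norm
  have h_telescope : (1 - z) * ∑' m : ℕ, (∑ j ∈ Icc (-(m : ℤ)) m, w ^ j) * z ^ m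
      = 1 + ∑' m : ℕ, ((w * z) ^ (m + 1) + (w⁻¹ * z) ^ (m + 1)) := by
    rw [one_sub_mul_tsum_mul_pow _ h_summable]
    congr 1
    · simp
    · exact tsum_congr fun m ↦ by rw [sum_Icc_zpow_succ]; ring
  rw [((h_geom hwz).add (h_geom hwz')).tsum_eq, one_add_div_one_sub_add_div_one_sub
    (one_sub_ne_zero_of_norm_lt_one hwz) (one_sub_ne_zero_of_norm_lt_one hwz'),
    show w * z * (w⁻¹ * z) = z ^ 2 by field_simp, show 1 - z ^ 2 = (1 - z) * (1 + z) by ring,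
    mul_div_assoc] at h_telescope
  rw [← inv_eq_conj hw]
  exact mul_left_cancel₀ (one_sub_ne_zero_of_norm_lt_one hz) h_telescope

/-- For `|z| < 1` and `|w| = 1` (`w` playing the role of `ω`):
`(1+z)/((1−wz)(1−w̄z)) = (1−z) Σ_{m≥0} |Σ_{j=0}^m w^j|² z^m`, both sides being equal to
`Σ_{m≥0} (Σ_{j=−m}^m w^j) z^m`, with both series converging absolutely. -/
theorem power_series_identity (z w : ℂ) (hz : ‖z‖ < 1) (hw : ‖w‖ = 1) :
    Summable (fun m : ℕ =>
      ‖Complex.ofReal (‖(Finset.range (m + 1)).sum (fun j : ℕ => w ^ j)‖ ^ 2) * z ^ m‖) ∧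
    Summable (fun m : ℕ =>
      ‖(Finset.Icc (-(m : ℤ)) (m : ℤ)).sum (fun j : ℤ => w ^ j) * z ^ m‖) ∧
    (1 + z) / ((1 - w * z) * (1 - (starRingEnd ℂ w) * z))
      = (1 - z) * ∑' m : ℕ,
          Complex.ofReal (‖(Finset.range (m + 1)).sum (fun j : ℕ => w ^ j)‖ ^ 2) * z ^ m ∧
    (1 + z) / ((1 - w * z) * (1 - (starRingEnd ℂ w) * z))
      = ∑' m : ℕ, (Finset.Icc (-(m : ℤ)) (m : ℤ)).sum (fun j : ℤ => w ^ j) * z ^ m := by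
  have hS_le (m : ℕ) : ‖((‖∑ j ∈ range (m + 1), w ^ j‖ ^ 2 : ℝ) : ℂ)‖ ≤ 1 * ((m : ℝ) + 1) ^ 2 := by
    rw [norm_real, norm_pow, norm_norm, one_mul]
    gcongr
    exact_mod_cast norm_geom_sum_le hw (m + 1)
  have hS := summable_norm_mul_pow_of_norm_le hS_le hz
  have hT := summable_norm_sum_Icc_zpow_mul_pow hw hz
  have hT_tsum := tsum_sum_Icc_zpow_mul_pow hw hz
  refine ⟨hS, hT, ?_, hT_tsum.symm⟩
  rw [one_sub_mul_tsum_mul_pow _ hS.of_norm, ← hT_tsum, hT.of_norm.tsum_eq_zero_add]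
  congr 1
  · simp
  · exact tsum_congr fun m ↦ by rw [norm_sq_geom_sum_succ_sub hw]
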